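/- Let G be a cubic graph and M1, M2 disjoint matchings with |M1 ∪ M2| maximum. If two distinct components of G − M1 − M2 are both copies of K_{1,3}, then no edge of M1 ∪ M2 joins a vertex of one to a vertex of the other. -/

import Mathlib

open SimpleGraph

/-- A matching in `G` given as a set of edges: edges of `G`, pairwise vertex-disjoint. -/
def IsMatchingSet {V : Type*} (G : SimpleGraph V) (M : Set (Sym2 V)) : Prop :=
  M ⊆ G.edgeSet ∧ ∀ e ∈ M, ∀ f ∈ M, e ≠ f → ∀ v, v ∈ e → v ∉ f

/-- `M1, M2` are disjoint matchings of `G` with `|M1 ∪ M2|` maximum over all pairs of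
disjoint matchings of `G`. -/
def MaxDisjointPair {V : Type*} (G : SimpleGraph V) (M1 M2 : Set (Sym2 V)) : Prop :=
  IsMatchingSet G M1 ∧ IsMatchingSet G M2 ∧ Disjoint M1 M2 ∧
  ∀ N1 N2 : Set (Sym2 V), IsMatchingSet G N1 → IsMatchingSet G N2 → Disjoint N1 N2 →
    (N1 ∪ N2).ncard ≤ (M1 ∪ M2).ncard

/-- Adjacency in `Ĝ = G − M1 − M2`: adjacency via an edge of `G` not in `M1 ∪ M2`. -/
def hatAdj {V : Type*} (G : SimpleGraph V) (M1 M2 : Set (Sym2 V)) (x y : V) : Prop :=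
  G.Adj x y ∧ s(x, y) ∉ M1 ∪ M2

/-- The vertices `u, l 0, l 1, l 2` form a `K_{1,3}` connected component of
`Ĝ = G − M1 − M2`, with center `u` and leaves `l i`. -/
def IsK13Component {V : Type*} (G : SimpleGraph V) (M1 M2 : Set (Sym2 V))
    (u : V) (l : Fin 3 → V) : Prop :=
  Function.Injective l ∧ (∀ i, l i ≠ u) ∧ (∀ i, hatAdj G M1 M2 u (l i)) ∧
  (∀ w, hatAdj G M1 M2 u w → ∃ i, w = l i) ∧
  (∀ i w, hatAdj G M1 M2 (l i) w → w = u)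

/-!
If an edge `l m` of, say, `M1` joined a leaf `l` of the first star to a leaf `m` of the second,
replace it in `M1` by the two star edges `u l` and `v m`. The centers `u, v` are covered by no
edge of `M1 ∪ M2`, since their three edges in `G` are already the three star edges, so the result
is again a matching disjoint from `M2`, and `|M1 ∪ M2|` has grown by one.
-/

theorem Set.ncard_insert_insert_sdiff_singleton {α : Type*} {S : Set α} (hS : S.Finite)
    {e x y : α} (he : e ∈ S) (hx : x ∉ S) (hy : y ∉ S) (hxy : x ≠ y) :
    (insert x (insert y (S \ {e}))).ncard = S.ncard + 1 := by
  have hS' : (S \ {e}).Finite := hS.sdiff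
  rw [Set.ncard_insert_of_notMem (by simp [hxy, hx]) (hS'.insert y),
    Set.ncard_insert_of_notMem (fun h => hy h.1) hS', Set.ncard_sdiff_singleton_add_one he hS]

theorem SimpleGraph.exists_eq_of_degree_le {V : Type*} {G : SimpleGraph V} {u : V}
    [Fintype (G.neighborSet u)] {n : ℕ} (hdeg : G.degree u ≤ n) {l : Fin n → V}
    (hl : Function.Injective l) (hadj : ∀ i, G.Adj u (l i)) {w : V} (hw : G.Adj u w) :
    ∃ i, w = l i := by
  classical
  have himage : Finset.univ.image l = G.neighborFinset u := by
    refine Finset.eq_of_subset_of_card_le ?_ ?_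
    · simpa [Finset.subset_iff] using hadj
    · rwa [Finset.card_image_of_injective _ hl, Finset.card_univ, Fintype.card_fin,
        card_neighborFinset_eq_degree]
  have hw' : w ∈ Finset.univ.image l := himage ▸ (mem_neighborFinset G u w).2 hw
  obtain ⟨i, -, rfl⟩ := Finset.mem_image.1 hw'
  exact ⟨i, rfl⟩

section Matchings

variable {V : Type*} {G : SimpleGraph V}

theorem IsMatchingSet.mono {M N : Set (Sym2 V)} (hM : IsMatchingSet G M) (hNM : N ⊆ M) :
    IsMatchingSet G N :=
  ⟨hNM.trans hM.1, fun e he f hf => hM.2 e (hNM he) f (hNM hf)⟩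

theorem IsMatchingSet.eq_of_mem {M : Set (Sym2 V)} (hM : IsMatchingSet G M) {e f : Sym2 V}
    (he : e ∈ M) (hf : f ∈ M) {z : V} (hze : z ∈ e) (hzf : z ∈ f) : e = f := by
  by_contra hne
  exact hM.2 e he f hf hne z hze hzf

theorem IsMatchingSet.insert_edge {M : Set (Sym2 V)} (hM : IsMatchingSet G M) {x y : V}
    (hxy : G.Adj x y) (hfree : ∀ f ∈ M, x ∉ f ∧ y ∉ f) :
    IsMatchingSet G (insert s(x, y) M) := by
  have hnew : ∀ f ∈ M, ∀ z ∈ s(x, y), z ∉ f := by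
    intro f hf z hz
    rcases Sym2.mem_iff.1 hz with rfl | rfl
    exacts [(hfree f hf).1, (hfree f hf).2]
  refine ⟨Set.insert_subset hxy hM.1, ?_⟩
  rintro e (rfl | he) f (rfl | hf) hne z hze hzf
  · exact hne rfl
  · exact hnew f hf z hze hzf
  · exact hnew e he z hzf hze
  · exact hM.2 e he f hf hne z hze hzf

theorem IsMatchingSet.exchange {A : Set (Sym2 V)} (hA : IsMatchingSet G A) {a b u v : V}
    (hab : s(a, b) ∈ A) (hu : ∀ f ∈ A, u ∉ f) (hv : ∀ f ∈ A, v ∉ f) (huv : u ≠ v)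
    (hua : G.Adj u a) (hvb : G.Adj v b) :
    IsMatchingSet G (insert s(u, a) (insert s(v, b) (A \ {s(a, b)}))) := by
  have hcover : ∀ z ∈ s(a, b), ∀ f ∈ A \ {s(a, b)}, z ∉ f := fun z hz f hf hzf =>
    hf.2 (hA.eq_of_mem hab hf.1 hz hzf).symm
  have hub : u ≠ b := fun h => hu _ hab (h ▸ Sym2.mem_mk_right a b)
  have hav : a ≠ v := fun h => hv _ hab (h ▸ Sym2.mem_mk_left a b)
  have hne : a ≠ b := G.ne_of_adj (hA.1 hab)
  refine ((hA.mono Set.sdiff_subset).insert_edge hvb ?_).insert_edge hua ?_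
  · exact fun f hf => ⟨hv f hf.1, hcover b (Sym2.mem_mk_right a b) f hf⟩
  · rintro f (rfl | hf)
    · simp [huv, hub, hav, hne]
    · exact ⟨hu f hf.1, hcover a (Sym2.mem_mk_left a b) f hf⟩

end Matchings

section MaxDisjointPair

variable {V : Type*} {G : SimpleGraph V} {M1 M2 : Set (Sym2 V)}

theorem hatAdj_comm (G : SimpleGraph V) (M1 M2 : Set (Sym2 V)) :
    hatAdj G M1 M2 = hatAdj G M2 M1 := by
  funext x y
  simp only [hatAdj, Set.union_comm M1 M2]

theorem MaxDisjointPair.symm (h : MaxDisjointPair G M1 M2) : MaxDisjointPair G M2 M1 := by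
  obtain ⟨h1, h2, hd, hmax⟩ := h
  exact ⟨h2, h1, hd.symm, Set.union_comm M2 M1 ▸ hmax⟩

theorem MaxDisjointPair.subset_edgeSet (h : MaxDisjointPair G M1 M2) :
    M1 ∪ M2 ⊆ G.edgeSet :=
  Set.union_subset h.1.1 h.2.1.1

theorem MaxDisjointPair.mk_notMem_left [Finite V] (h : MaxDisjointPair G M1 M2) {a b u v : V}
    (hu : ∀ f ∈ M1 ∪ M2, u ∉ f) (hv : ∀ f ∈ M1 ∪ M2, v ∉ f) (huv : u ≠ v)
    (hua : hatAdj G M1 M2 u a) (hvb : hatAdj G M1 M2 v b) : s(a, b) ∉ M1 := by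
  intro hab
  obtain ⟨h1, h2, hd, hmax⟩ := h
  have habM2 : s(a, b) ∉ M2 := Set.disjoint_left.1 hd hab
  have hdisj : Disjoint (insert s(u, a) (insert s(v, b) (M1 \ {s(a, b)}))) M2 :=
    Set.disjoint_insert_left.2 ⟨fun h => hua.2 (Or.inr h),
      Set.disjoint_insert_left.2 ⟨fun h => hvb.2 (Or.inr h), hd.mono_left Set.sdiff_subset⟩⟩
  have hunion : insert s(u, a) (insert s(v, b) (M1 \ {s(a, b)})) ∪ M2 =
      insert s(u, a) (insert s(v, b) ((M1 ∪ M2) \ {s(a, b)})) := by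
    rw [Set.union_sdiff_distrib, Set.sdiff_singleton_eq_self habM2, Set.insert_union,
      Set.insert_union]
  have hne : s(u, a) ≠ s(v, b) := by
    intro h
    rcases Sym2.mem_iff.1 (h ▸ Sym2.mem_mk_left u a) with rfl | rfl
    · exact huv rfl
    · exact hu _ (Or.inl hab) (Sym2.mem_mk_right a u)
  have hgrow := hmax _ M2 (IsMatchingSet.exchange h1 hab (fun f hf => hu f (Or.inl hf))
    (fun f hf => hv f (Or.inl hf)) huv hua.1 hvb.1) h2 hdisj
  rw [hunion, Set.ncard_insert_insert_sdiff_singleton (Set.toFinite _)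
    (Set.mem_union_left M2 hab) hua.2 hvb.2 hne] at hgrow
  omega

theorem MaxDisjointPair.mk_notMem [Finite V] (h : MaxDisjointPair G M1 M2) {a b u v : V}
    (hu : ∀ f ∈ M1 ∪ M2, u ∉ f) (hv : ∀ f ∈ M1 ∪ M2, v ∉ f) (huv : u ≠ v)
    (hua : hatAdj G M1 M2 u a) (hvb : hatAdj G M1 M2 v b) : s(a, b) ∉ M1 ∪ M2 := by
  rintro (hab | hab)
  · exact h.mk_notMem_left hu hv huv hua hvb hab
  · rw [Set.union_comm] at hu hv
    rw [hatAdj_comm] at hua hvb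
    exact h.symm.mk_notMem_left hu hv huv hua hvb hab

end MaxDisjointPair

theorem IsK13Component.center_notMem {V : Type*} {G : SimpleGraph V} {M1 M2 : Set (Sym2 V)}
    {u : V} {l : Fin 3 → V} [Fintype (G.neighborSet u)] (hu : IsK13Component G M1 M2 u l)
    (hdeg : G.degree u ≤ 3) (hsub : M1 ∪ M2 ⊆ G.edgeSet) : ∀ e ∈ M1 ∪ M2, u ∉ e := by
  intro e he hue
  obtain ⟨w, rfl⟩ := Sym2.mem_iff_exists.1 hue
  obtain ⟨i, rfl⟩ := exists_eq_of_degree_le hdeg hu.1 (fun i => (hu.2.2.1 i).1) (hsub he)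
  exact (hu.2.2.1 i).2 he

theorem stmt7 {V : Type*} [Fintype V] (G : SimpleGraph V) [DecidableRel G.Adj]
    (hcubic : ∀ v : V, G.degree v = 3) (M1 M2 : Set (Sym2 V))
    (hmax : MaxDisjointPair G M1 M2)
    (u : V) (l : Fin 3 → V) (hu : IsK13Component G M1 M2 u l)
    (v : V) (m : Fin 3 → V) (hv : IsK13Component G M1 M2 v m)
    (hdisj : ({u} ∪ Set.range l) ∩ ({v} ∪ Set.range m) = (∅ : Set V)) :
    ∀ x ∈ ({u} ∪ Set.range l : Set V), ∀ y ∈ ({v} ∪ Set.range m : Set V),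
      s(x, y) ∉ M1 ∪ M2 := by
  have hufree := hu.center_notMem (hcubic u).le hmax.subset_edgeSet
  have hvfree := hv.center_notMem (hcubic v).le hmax.subset_edgeSet
  have huv : u ≠ v := fun h =>
    Set.eq_empty_iff_forall_notMem.1 hdisj u ⟨Or.inl rfl, Or.inl h⟩
  rintro x (rfl | ⟨i, rfl⟩) y (rfl | ⟨j, rfl⟩) hxy
  · exact hufree _ hxy (Sym2.mem_mk_left _ _)
  · exact hufree _ hxy (Sym2.mem_mk_left _ _)
  · exact hvfree _ hxy (Sym2.mem_mk_right _ _)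
  · exact hmax.mk_notMem hufree hvfree huv (hu.2.2.1 i) (hv.2.2.1 j) hxy
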